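/- arXiv:2002.08785 — 2 statements merged into one kernel-verified Lean document; each statement's English description precedes it below -/
import Mathlib

section
/- The change-of-basis matrix from the multi-arc family to the code-sequence family is unitriangular: ordering E⁰_{n,r} lexicographically, the expression A'(k₀,…,k_{n−1}) = Σ_{l_{n−1}=0}^{k_{n−1}} Σ_{l_{n−2}=0}^{k_{n−2}+l_{n−1}} ⋯ Σ_{l₁=0}^{k₁+l₂} (∏_{i=0}^{n−2} C(k_i+l_{i+1}, l_{i+1})_𝚝) · U(k₀+l₁, k₁+l₂−l₁, …, k_{n−2}+l_{n−1}−l_{n−2}, k_{n−1}−l_{n−1}) defines a square matrix over ℤ[𝚝] indexed by E⁰_{n,r} whose diagonal entries are all 1 and which is triangular with respect to the lexicographic order; in particular its determinant is 1. -/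
open Polynomial

/-- The Gaussian binomial coefficient `C(n, l)_𝚝 ∈ ℤ[𝚝]`, via the Pascal-type
recursion. -/
noncomputable def gbinom : ℕ → ℕ → Polynomial ℤ
  | _, 0 => 1
  | 0, _ + 1 => 0
  | n + 1, l + 1 => gbinom n (l + 1) + X ^ (n - l) * gbinom n l

/-- The entry, in row `k` (indexing the multi-arc `A'(k₀,…,k_{n−1})`) and column
`u` (indexing the code sequence `U(u₀,…,u_{n−1})`), of the change-of-basis
matrix given by the expansion
`A'(k₀,…,k_{n−1}) = Σ_{l_{n−1}=0}^{k_{n−1}} Σ_{l_{n−2}=0}^{k_{n−2}+l_{n−1}} ⋯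
Σ_{l₁=0}^{k₁+l₂} (∏_{i=0}^{n−2} C(k_i+l_{i+1}, l_{i+1})_𝚝) ·
U(k₀+l₁, k₁+l₂−l₁, …, k_{n−2}+l_{n−1}−l_{n−2}, k_{n−1}−l_{n−1})`.
The nested sum is encoded by summing over the tuples `l : Fin (n+1) → ℕ`
with `l 0 = 0 = l n` satisfying `u i + l i = k i + l (i+1)` for all `i < n`
(this equation encodes both the value of the resulting tuple and the bounds
`l_i ≤ k_i + l_{i+1}`; all admissible `l i` are automatically `≤ r`). -/
noncomputable def Mentry (n r : ℕ) (k u : Fin n → ℕ) : Polynomial ℤ :=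
  ∑ l ∈ (Fintype.piFinset fun _ : Fin (n + 1) => Finset.range (r + 1)).filter
      (fun l => l 0 = 0 ∧ l (Fin.last n) = 0 ∧
        ∀ i : Fin n, u i + l i.castSucc = k i + l i.succ),
    ∏ i : Fin n, gbinom (k i + l i.succ) (l i.succ)

/-- `E⁰_{n,r}` as a finite type, via `Finset.Nat.antidiagonalTuple`. -/
noncomputable instance instFintypeE0 (n r : ℕ) :
    Fintype {k : Fin n → ℕ // ∑ i, k i = r} :=
  Fintype.subtype (Finset.Nat.antidiagonalTuple n r) fun k =>
    Finset.Nat.mem_antidiagonalTuple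

lemma gbinom_zero (m : ℕ) : gbinom m 0 = 1 := by cases m <;> rfl

lemma Mentry_diag (n r : ℕ) (k : Fin n → ℕ) : Mentry n r k k = 1 := by
  unfold Mentry
  have hfilter : (Fintype.piFinset fun _ : Fin (n + 1) => Finset.range (r + 1)).filter
      (fun l => l 0 = 0 ∧ l (Fin.last n) = 0 ∧
        ∀ i : Fin n, k i + l i.castSucc = k i + l i.succ) = {fun _ => 0} := by
    ext l
    simp only [Finset.mem_filter, Finset.mem_singleton, Fintype.mem_piFinset,
      Finset.mem_range]
    constructor
    · rintro ⟨-, h0, -, hstep⟩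
      funext j
      induction j using Fin.induction with
      | zero => exact h0
      | succ i ih => rw [← Nat.add_left_cancel (hstep i), ih]
    · rintro rfl
      exact ⟨fun _ => Nat.succ_pos r, rfl, rfl, fun i => rfl⟩
  rw [hfilter, Finset.sum_singleton]
  simp [gbinom_zero]

lemma Mentry_lt (n r : ℕ) (k u : Fin n → ℕ)
    (h : ∃ i : Fin n, u i < k i ∧ ∀ j : Fin n, j < i → u j = k j) :
    Mentry n r k u = 0 := by
  obtain ⟨i, hlt, hpre⟩ := h
  unfold Mentry
  apply Finset.sum_eq_zero
  intro l hl
  simp only [Finset.mem_filter] at hl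
  obtain ⟨-, h0, -, hstep⟩ := hl
  exfalso
  have key : ∀ j : Fin (n + 1), j.val ≤ i.val → l j = 0 := by
    intro j
    induction j using Fin.induction with
    | zero => intro _; exact h0
    | succ p ih =>
      intro hm
      simp only [Fin.val_succ] at hm
      have hpi : p < i := by rwa [Fin.lt_def, ← Nat.succ_le_iff]
      have h1 := hstep p
      rw [hpre p hpi] at h1
      have h2 : l p.castSucc = l p.succ := Nat.add_left_cancel h1
      rw [← h2]
      exact ih (by simpa using Nat.le_of_succ_le hm)
  have hcast : l i.castSucc = 0 := key i.castSucc (by simp)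
  have := hstep i
  rw [hcast] at this
  omega

/-- The change-of-basis matrix from the multi-arc family to
the code-sequence family is unitriangular: its diagonal entries are all `1`, it
is triangular for the lexicographic order on `E⁰_{n,r}` (the entry at `(k, u)`
vanishes whenever `u` is lexicographically smaller than `k`), and its
determinant is `1`. -/
theorem Mentry_unitriangular (n r : ℕ) :
    (∀ k : Fin n → ℕ, (∑ i, k i = r) → Mentry n r k k = 1) ∧
      (∀ k u : Fin n → ℕ, (∑ i, k i = r) → (∑ i, u i = r) →
        (∃ i : Fin n, u i < k i ∧ ∀ j : Fin n, j < i → u j = k j) →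
        Mentry n r k u = 0) ∧
      Matrix.det
          (Matrix.of fun k u : {k : Fin n → ℕ // ∑ i, k i = r} =>
            Mentry n r k.1 u.1) = 1 := by
  refine ⟨fun k _ => Mentry_diag n r k, fun k u _ _ h => Mentry_lt n r k u h, ?_⟩
  haveI : WellFoundedLT (Fin n) := inferInstance
  letI instL : LinearOrder (Lex (Fin n → ℕ)) :=
    inferInstanceAs (LinearOrder (Πₗ _ : Fin n, ℕ))
  letI : LinearOrder {k : Fin n → ℕ // ∑ i, k i = r} :=
    LinearOrder.lift' (fun k => toLex k.1)
      (fun a b h => Subtype.ext (toLex.injective h))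
  rw [Matrix.det_of_upperTriangular]
  · exact Finset.prod_eq_one fun k _ => Mentry_diag n r k.1
  · intro a b hba
    have hlex : Pi.Lex (· < ·) (fun {_} => (· < ·)) b.1 a.1 := hba
    obtain ⟨i, hpre, hlt⟩ := hlex
    exact Mentry_lt n r a.1 b.1 ⟨i, hlt, fun j hj => hpre j hj⟩
end

section
/- The linear map sending the Verma basis vector v_k to the normalized one-puncture multi-arc class A(k) intertwines the U_q(sl2)-actions: with 𝚝 = q^{−2} and s = q^{α₁}, the operators K·A(k) = q^{α₁}𝚝^{k}A(k), E·A(k) = A(k−1), and F^{(1)}·A(k) = q^{α₁}(k+1)_𝚝(1 − q^{−2α₁}𝚝^{−k})A(k+1) satisfy K·A(k) = s q^{−2k}A(k) and F^{(1)}·A(k) = [k+1]_q(s q^{−k} − s^{−1}q^{k})A(k+1); hence the map v_k ↦ A(k) is an isomorphism of modules over the algebra generated by E, F^{(1)}, K^{±1}. -/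
noncomputable section

/-- The balanced quantum integer `[i]_q = q^{i−1} + q^{i−3} + ⋯ + q^{1−i}`. -/
def qint {R : Type*} [CommRing R] (q : Rˣ) (i : ℕ) : R :=
  ∑ m ∈ Finset.range i, ((q ^ ((i : ℤ) - 1 - 2 * m) : Rˣ) : R)

/-- `[k]_q! = ∏_{i=1}^k [i]_q`. -/
def qfact {R : Type*} [CommRing R] (q : Rˣ) (k : ℕ) : R :=
  ∏ i ∈ Finset.range k, qint q (i + 1)

/-- The balanced `q`-binomial coefficient `[n choose l]_q = [n]_q!/([n−l]_q![l]_q!)`,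
defined via the balanced Pascal recursion. -/
def qbinom {R : Type*} [CommRing R] (q : Rˣ) : ℕ → ℕ → R
  | _, 0 => 1
  | 0, _ + 1 => 0
  | n + 1, l + 1 =>
      ((q ^ (-((l : ℤ) + 1)) : Rˣ) : R) * qbinom q n (l + 1) +
        ((q ^ ((n : ℤ) - l) : Rˣ) : R) * qbinom q n l

variable {R : Type*} [CommRing R]

/-- The basis vector `v_j` of the Verma module `V^s`, realized as the free
module `ℕ →₀ R` on the basis `{v_j : j ∈ ℕ}`. -/
def v (j : ℕ) : ℕ →₀ R := Finsupp.single j 1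

/-- The action of `K` on `V^s`: `K·v_j = s q^{−2j} v_j`. -/
def Kop (q s : Rˣ) : (ℕ →₀ R) →ₗ[R] (ℕ →₀ R) :=
  Finsupp.lsum ℕ fun j => ((s * q ^ (-2 * (j : ℤ)) : Rˣ) : R) • Finsupp.lsingle j

/-- The action of `K⁻¹` on `V^s`: `K⁻¹·v_j = s⁻¹ q^{2j} v_j`. -/
def KopInv (q s : Rˣ) : (ℕ →₀ R) →ₗ[R] (ℕ →₀ R) :=
  Finsupp.lsum ℕ fun j => ((s⁻¹ * q ^ (2 * (j : ℤ)) : Rˣ) : R) • Finsupp.lsingle j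

/-- The action of `E` on `V^s`: `E·v_j = v_{j−1}`, with `v_{−1} = 0`. -/
def Eop : (ℕ →₀ R) →ₗ[R] (ℕ →₀ R) :=
  Finsupp.lsum ℕ fun j => if j = 0 then 0 else Finsupp.lsingle (j - 1)

/-- The action of the divided power `F^{(n)}` on `V^s`:
`F^{(n)}·v_j = [n+j choose j]_q · ∏_{k=0}^{n−1}(s q^{−k−j} − s^{−1} q^{j+k}) · v_{j+n}`. -/
def Fdiv (q s : Rˣ) (n : ℕ) : (ℕ →₀ R) →ₗ[R] (ℕ →₀ R) :=
  Finsupp.lsum ℕ fun j =>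
    (qbinom q (n + j) j *
        ∏ k ∈ Finset.range n,
          (((s * q ^ (-(k : ℤ) - (j : ℤ)) : Rˣ) : R) -
            ((s⁻¹ * q ^ ((j : ℤ) + (k : ℤ)) : Rˣ) : R))) •
      Finsupp.lsingle (j + n)

/-- The action of `F := F^{(1)}` on `V^s`:
`F·v_j = [j+1]_q (s q^{−j} − s^{−1} q^{j}) v_{j+1}`. -/
def Fop (q s : Rˣ) : (ℕ →₀ R) →ₗ[R] (ℕ →₀ R) :=
  Finsupp.lsum ℕ fun j =>
    (qint q (j + 1) *
        (((s * q ^ (-(j : ℤ)) : Rˣ) : R) - ((s⁻¹ * q ^ (j : ℤ) : Rˣ) : R))) •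
      Finsupp.lsingle (j + 1)

/-- The homological action of `K` on the free module with basis
`{A(k) : k ∈ ℕ}` (realized as `ℕ →₀ R`): `K·A(k) = q^{α₁}𝚝^{k}A(k)` with
`𝚝 = q^{−2}`, the invertible element `a` playing `q^{α₁}`. -/
def KH (q a : Rˣ) : (ℕ →₀ R) →ₗ[R] (ℕ →₀ R) :=
  Finsupp.lsum ℕ fun k => ((a * (q ^ (-2 : ℤ)) ^ k : Rˣ) : R) • Finsupp.lsingle k

/-- The homological action of `E`: `E·A(k) = A(k−1)` (and `E·A(0) = 0`). -/
def EH : (ℕ →₀ R) →ₗ[R] (ℕ →₀ R) :=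
  Finsupp.lsum ℕ fun k => if k = 0 then 0 else Finsupp.lsingle (k - 1)

/-- The homological action of `F^{(1)}`:
`F^{(1)}·A(k) = q^{α₁}(k+1)_𝚝(1 − q^{−2α₁}𝚝^{−k})A(k+1)` with `𝚝 = q^{−2}`
(so `(k+1)_𝚝 = Σ_{m≤k} 𝚝^m` and `𝚝^{−k} = q^{2k}`). -/
def FH (q a : Rˣ) : (ℕ →₀ R) →ₗ[R] (ℕ →₀ R) :=
  Finsupp.lsum ℕ fun k =>
    ((a : R) * (∑ m ∈ Finset.range (k + 1), (((q ^ (-2 : ℤ)) ^ m : Rˣ) : R)) *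
        (1 - ((a ^ (-2 : ℤ) * q ^ (2 * (k : ℤ)) : Rˣ) : R))) •
      Finsupp.lsingle (k + 1)

lemma unitK_eq (q a : Rˣ) (k : ℕ) :
    (a * (q ^ (-2 : ℤ)) ^ k : Rˣ) = (a * q ^ (-2 * (k : ℤ)) : Rˣ) := by
  congr 1
  rw [← zpow_natCast (q ^ (-2 : ℤ)) k, ← zpow_mul]

lemma scalarF_eq (q a : Rˣ) (k : ℕ) :
    qint q (k + 1) *
        (((a * q ^ (-(k : ℤ)) : Rˣ) : R) - ((a⁻¹ * q ^ (k : ℤ) : Rˣ) : R)) =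
      (a : R) * (∑ m ∈ Finset.range (k + 1), (((q ^ (-2 : ℤ)) ^ m : Rˣ) : R)) *
        (1 - ((a ^ (-2 : ℤ) * q ^ (2 * (k : ℤ)) : Rˣ) : R)) := by
  rw [qint, Finset.sum_mul, mul_assoc, Finset.sum_mul, Finset.mul_sum]
  refine Finset.sum_congr rfl fun m hm => ?_
  rw [mul_sub, mul_sub, mul_one, mul_sub ((a : R)), ← mul_assoc ((a : R)),
    ← Units.val_mul, ← Units.val_mul, ← Units.val_mul, ← Units.val_mul]
  rw [← zpow_natCast (q ^ (-2 : ℤ)) m, ← zpow_mul,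
    show ((k + 1 : ℕ) : ℤ) - 1 - 2 * m = (-(2 : ℤ) * m) + k by push_cast; ring]
  congr 2
  · rw [mul_comm a, ← mul_assoc, ← zpow_add, mul_comm]
    congr 1
    ring_nf
  · rw [mul_left_comm, ← zpow_add, mul_mul_mul_comm, ← zpow_add,
      show a * a ^ (-2 : ℤ) = a⁻¹ by group]
    congr 1
    ring_nf

/-- With `𝚝 = q^{−2}` and `s = q^{α₁}` (the invertible
element `a`), the homological operators satisfy `K·A(k) = s q^{−2k}A(k)` and
`F^{(1)}·A(k) = [k+1]_q(s q^{−k} − s^{−1}q^{k})A(k+1)`; hence the linear map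
sending the Verma basis vector `v_k` to the normalized one-puncture multi-arc
`A(k)` is an isomorphism of modules over the algebra generated by
`E, F^{(1)}, K^{±1}`, intertwining the Verma action (`Kop`, `Eop`, `Fop`) with
the homological action (`KH`, `EH`, `FH`). -/
theorem onePuncture_iso_Verma (q a : Rˣ) :
    (∀ k : ℕ, KH q a (v k) = ((a * q ^ (-2 * (k : ℤ)) : Rˣ) : R) • v k) ∧
      (∀ k : ℕ,
        FH q a (v k) =
          (qint q (k + 1) *
              (((a * q ^ (-(k : ℤ)) : Rˣ) : R) - ((a⁻¹ * q ^ (k : ℤ) : Rˣ) : R))) •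
            v (k + 1)) ∧
      ∃ T : (ℕ →₀ R) ≃ₗ[R] (ℕ →₀ R),
        (∀ k : ℕ, T (v k) = v k) ∧
          T.toLinearMap.comp (Kop q a) = (KH q a).comp T.toLinearMap ∧
          T.toLinearMap.comp Eop = EH.comp T.toLinearMap ∧
          T.toLinearMap.comp (Fop q a) = (FH q a).comp T.toLinearMap := by
  have hK : ∀ k : ℕ, KH q a (v k) = ((a * q ^ (-2 * (k : ℤ)) : Rˣ) : R) • v k := by
    intro k
    simp only [KH, v, Finsupp.lsum_single, LinearMap.smul_apply, Finsupp.lsingle_apply]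
    rw [unitK_eq]
  have hF : ∀ k : ℕ,
      FH q a (v k) =
        (qint q (k + 1) *
            (((a * q ^ (-(k : ℤ)) : Rˣ) : R) - ((a⁻¹ * q ^ (k : ℤ) : Rˣ) : R))) •
          v (k + 1) := by
    intro k
    simp only [FH, v, Finsupp.lsum_single, LinearMap.smul_apply, Finsupp.lsingle_apply]
    rw [← scalarF_eq]
  refine ⟨hK, hF, LinearEquiv.refl R _, fun k => rfl, ?_, rfl, ?_⟩
  · refine Finsupp.lhom_ext fun j r => ?_
    simp only [LinearMap.comp_apply, LinearEquiv.coe_coe, LinearEquiv.refl_apply,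
      Kop, KH, Finsupp.lsum_single, LinearMap.smul_apply, Finsupp.lsingle_apply]
    rw [unitK_eq]
  · refine Finsupp.lhom_ext fun j r => ?_
    simp only [LinearMap.comp_apply, LinearEquiv.coe_coe, LinearEquiv.refl_apply,
      Fop, FH, Finsupp.lsum_single, LinearMap.smul_apply, Finsupp.lsingle_apply]
    rw [scalarF_eq]
end
end
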